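/- Let Λ be a linear system of quadric hypersurfaces in ℙ^n whose base locus Y has the property that Λ fails to separate points and tangent directions only along Y (i.e. the induced rational map is an isomorphism outside Y). If Y is nonempty and for any two points y₁, y₂ ∈ Y the quadrics of Λ cannot separate points on the line ⟨y₁,y₂⟩, then Y is a linear subspace ℙ^s of ℙ^n. -/
import Mathlib


/- Common framework: subvarieties of complex projective space, parametrized
rational curves, conics, Zariski-closed subsets, genericity, smoothness via the
Jacobian criterion, dimension via chains of subvarieties, rationality via
generically injective dominant rational maps, and abstract numerical data
(intersection theory, canonical and hyperplane classes, normal-bundle splitting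
types, Betti/Picard numbers). -/

noncomputable section

namespace CC

/-- Projective space of the vector space `ι → ℂ`. -/
abbrev Proj (ι : Type) := Projectivization ℂ (ι → ℂ)

variable {ι : Type} [Fintype ι]

/-- Evaluation of a tuple of binary polynomials at a parameter. -/
def pev (F : ι → MvPolynomial (Fin 2) ℂ) (v : Fin 2 → ℂ) : ι → ℂ :=
  fun i => MvPolynomial.eval v (F i)

/-- A Zariski-closed subset of projective space: common zero locus of a set of
homogeneous polynomials. -/
def ZClosed (S : Set (Proj ι)) : Prop :=
  ∃ I : Set (MvPolynomial ι ℂ),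
    (∀ f ∈ I, ∃ d, f.IsHomogeneous d) ∧
    S = {x | ∀ f ∈ I, MvPolynomial.eval x.rep f = 0}

/-- Image of a parametrized rational curve `ℙ¹ → ℙ(ι → ℂ)`. -/
def curveImage (F : ι → MvPolynomial (Fin 2) ℂ) : Set (Proj ι) :=
  {y | ∃ (v : Fin 2 → ℂ) (h : pev F v ≠ 0), y = Projectivization.mk ℂ (pev F v) h}

/-- A base-point-free tuple of binary forms of degree `d`. -/
def GoodParam (d : ℕ) (F : ι → MvPolynomial (Fin 2) ℂ) : Prop :=
  (∀ i, (F i).IsHomogeneous d) ∧ ∀ v : Fin 2 → ℂ, v ≠ 0 → pev F v ≠ 0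

/-- `C` is the image of a degree-`d` morphism `ℙ¹ → ℙ^N`. -/
def IsDegCurve (d : ℕ) (C : Set (Proj ι)) : Prop :=
  ∃ F, GoodParam d F ∧ C = curveImage F

/-- A line. -/
def IsLine (C : Set (Proj ι)) : Prop := IsDegCurve 1 C

/-- An irreducible conic: a degree-2 rational curve not contained in a line. -/
def IsIrredConic (C : Set (Proj ι)) : Prop :=
  IsDegCurve 2 C ∧ ¬ ∃ L, IsLine L ∧ C ⊆ L

/-- A rational curve. -/
def IsRatCurve (C : Set (Proj ι)) : Prop := ∃ d, 0 < d ∧ IsDegCurve d C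

/-- A rational 1-cycle: a finite union of rational curves. -/
def IsRatCycle (C : Set (Proj ι)) : Prop :=
  ∃ (k : ℕ) (Cs : Fin (k+1) → Set (Proj ι)),
    (∀ i, IsRatCurve (Cs i)) ∧ C = ⋃ i, Cs i

/-- `P` holds for every pair of general points of `X`. -/
def GenPts (X : Set (Proj ι)) (P : Proj ι → Proj ι → Prop) : Prop :=
  ∃ Z, ZClosed Z ∧ ¬ X ⊆ Z ∧ ∀ x ∈ X \ Z, ∀ x' ∈ X \ Z, P x x'

/-- `P` holds at a general point of `X`. -/
def Gen (X : Set (Proj ι)) (P : Proj ι → Prop) : Prop :=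
  ∃ Z, ZClosed Z ∧ ¬ X ⊆ Z ∧ ∀ x ∈ X \ Z, P x

/-- Conic-connected: two general points are joined by an irreducible conic in `X`. -/
def ConicConnected (X : Set (Proj ι)) : Prop :=
  GenPts X fun x x' => ∃ C, IsIrredConic C ∧ C ⊆ X ∧ x ∈ C ∧ x' ∈ C

/-- Rationally connected: two general points are joined by a rational curve in `X`. -/
def RatConnected (X : Set (Proj ι)) : Prop :=
  GenPts X fun x x' => ∃ C, IsRatCurve C ∧ C ⊆ X ∧ x ∈ C ∧ x' ∈ C

/-- A projective variety: a nonempty irreducible Zariski-closed subset. -/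
def IsVariety (X : Set (Proj ι)) : Prop :=
  ZClosed X ∧ X.Nonempty ∧
    ∀ Z₁ Z₂ : Set (Proj ι), ZClosed Z₁ → ZClosed Z₂ → X ⊆ Z₁ ∪ Z₂ → X ⊆ Z₁ ∨ X ⊆ Z₂

/-- Jacobian matrix of a family of polynomials in the ambient coordinates. -/
def jacAmb [DecidableEq ι] {k : ℕ} (f : Fin k → MvPolynomial ι ℂ) (v : ι → ℂ) :
    Matrix (Fin k) ι ℂ :=
  Matrix.of fun j i => MvPolynomial.eval v (MvPolynomial.pderiv i (f j))

/-- `S` is cut out by homogeneous equations whose Jacobian has the expected rank at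
every point of `S`; i.e. `S` is smooth of dimension `n`. -/
def SmoothOfDim [DecidableEq ι] (n : ℕ) (S : Set (Proj ι)) : Prop :=
  S.Nonempty ∧ ∃ (k : ℕ) (f : Fin k → MvPolynomial ι ℂ),
    (∀ j, ∃ d, (f j).IsHomogeneous d) ∧
    S = {x | ∀ j, MvPolynomial.eval x.rep (f j) = 0} ∧
    ∀ x ∈ S, (jacAmb f x.rep).rank = Fintype.card ι - 1 - n

/-- A smooth projective variety of dimension `n`. -/
def SmoothVariety [DecidableEq ι] (n : ℕ) (X : Set (Proj ι)) : Prop :=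
  IsVariety X ∧ SmoothOfDim n X

/-- `x` is a smooth point of the `n`-dimensional variety `X` (Jacobian criterion at `x`). -/
def SmoothPointOf [DecidableEq ι] (n : ℕ) (X : Set (Proj ι)) (x : Proj ι) : Prop :=
  x ∈ X ∧ ∃ (k : ℕ) (f : Fin k → MvPolynomial ι ℂ),
    (∀ j, ∃ d, (f j).IsHomogeneous d) ∧
    X = {y | ∀ j, MvPolynomial.eval y.rep (f j) = 0} ∧
    (jacAmb f x.rep).rank = Fintype.card ι - 1 - n

/-- `X` is nondegenerate: contained in no hyperplane. -/
def Nondegenerate (X : Set (Proj ι)) : Prop :=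
  ¬ ∃ φ : (ι → ℂ) →ₗ[ℂ] ℂ, φ ≠ 0 ∧ ∀ x ∈ X, φ x.rep = 0

/-- A strictly increasing chain of subvarieties of length `k` inside `S`. -/
def chainIn (S : Set (Proj ι)) (k : ℕ) : Prop :=
  ∃ c : Fin (k+1) → Set (Proj ι),
    (∀ i, IsVariety (c i) ∧ c i ⊆ S) ∧ ∀ i j : Fin (k+1), i < j → c i ⊂ c j

/-- `S` has dimension `n` (longest chain of subvarieties has length `n`). -/
def HasDim (S : Set (Proj ι)) (n : ℕ) : Prop :=
  chainIn S n ∧ ∀ k, chainIn S k → k ≤ n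

/-- `X` is rational of dimension `n`: there is a generically injective dominant
rational map `ℙⁿ ⤏ X` given by homogeneous forms. -/
def Rational (n : ℕ) (X : Set (Proj ι)) : Prop :=
  ∃ (d : ℕ) (F : ι → MvPolynomial (Fin (n+1)) ℂ),
    (∀ i, (F i).IsHomogeneous d) ∧
    (∃ Z, ZClosed Z ∧ ¬ X ⊆ Z ∧
      ∀ y ∈ X \ Z, ∃ (v : Fin (n+1) → ℂ) (h : (fun i => MvPolynomial.eval v (F i)) ≠ 0),
        y = Projectivization.mk ℂ (fun i => MvPolynomial.eval v (F i)) h) ∧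
    ∀ (v w : Fin (n+1) → ℂ) (hv0 : v ≠ 0) (hw0 : w ≠ 0)
      (hv : (fun i => MvPolynomial.eval v (F i)) ≠ 0)
      (hw : (fun i => MvPolynomial.eval w (F i)) ≠ 0),
      Projectivization.mk ℂ (fun i => MvPolynomial.eval v (F i)) hv =
        Projectivization.mk ℂ (fun i => MvPolynomial.eval w (F i)) hw →
      Projectivization.mk ℂ v hv0 = Projectivization.mk ℂ w hw0

/-- Jacobian of a parametrized curve, in the curve parameter. -/
def jacC (F : ι → MvPolynomial (Fin 2) ℂ) (v : Fin 2 → ℂ) : Matrix ι (Fin 2) ℂ :=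
  Matrix.of fun i j => MvPolynomial.eval v (MvPolynomial.pderiv j (F i))

/-- The (irreducible rational) curve `C` is smooth at `x`: it has a parametrization
that is immersive at a parameter of `x` and `x` has a unique parameter. -/
def CurveSmoothAt (x : Proj ι) (C : Set (Proj ι)) : Prop :=
  ∃ d F, GoodParam d F ∧ C = curveImage F ∧
    ∃ (v : Fin 2 → ℂ) (h : pev F v ≠ 0),
      x = Projectivization.mk ℂ (pev F v) h ∧ (jacC F v).rank = 2 ∧
      ∀ (w : Fin 2 → ℂ) (hw : pev F w ≠ 0),
        x = Projectivization.mk ℂ (pev F w) hw →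
        ∀ (hv0 : v ≠ 0) (hw0 : w ≠ 0),
          Projectivization.mk ℂ v hv0 = Projectivization.mk ℂ w hw0

/-- A rational 1-cycle is smooth at `x`: exactly one component passes through `x`
and that component is smooth at `x`. -/
def CycleSmoothAt (x : Proj ι) (C : Set (Proj ι)) : Prop :=
  ∃ (k : ℕ) (Cs : Fin (k+1) → Set (Proj ι)),
    (∀ i, IsRatCurve (Cs i)) ∧ C = ⋃ i, Cs i ∧
    ∃ i₀, x ∈ Cs i₀ ∧ CurveSmoothAt x (Cs i₀) ∧ ∀ i, x ∈ Cs i → i = i₀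

/-- `T` is the (affine cone of the) tangent space at `x` of the curve `C`. -/
def IsTangentAt (x : Proj ι) (C : Set (Proj ι)) (T : Submodule ℂ (ι → ℂ)) : Prop :=
  ∃ d F, GoodParam d F ∧ C = curveImage F ∧
    ∃ (v : Fin 2 → ℂ) (h : pev F v ≠ 0),
      x = Projectivization.mk ℂ (pev F v) h ∧
      T = Submodule.span ℂ
        (Set.range fun j : Fin 2 => fun i => MvPolynomial.eval v (MvPolynomial.pderiv j (F i)))

/-- An `x`-covering family of rational 1-cycles on `X`: every member is a rational
1-cycle through `x` contained in `X`, the members cover `X`, and the member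
through a general point of `X` is an irreducible rational curve smooth at `x`. -/
structure XCovFam (X : Set (Proj ι)) (x : Proj ι) (𝒞 : Set (Set (Proj ι))) : Prop where
  nonempty : 𝒞.Nonempty
  cycles : ∀ C ∈ 𝒞, IsRatCycle C ∧ x ∈ C ∧ C ⊆ X
  covers : ∀ y ∈ X, ∃ C ∈ 𝒞, y ∈ C
  gen_irred : ∃ Z, ZClosed Z ∧ ¬ X ⊆ Z ∧
    ∀ y ∈ X \ Z, ∃ C ∈ 𝒞, y ∈ C ∧ IsRatCurve C ∧ CurveSmoothAt x C

/-- A smooth family: every 1-cycle of the family is smooth at `x`. -/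
def SmoothFam (x : Proj ι) (𝒞 : Set (Set (Proj ι))) : Prop :=
  ∀ C ∈ 𝒞, CycleSmoothAt x C

/-- Infinitesimal uniqueness: a general member of the family is uniquely
determined by its tangent space at `x`. -/
def InfUniq (X : Set (Proj ι)) (x : Proj ι) (𝒞 : Set (Set (Proj ι))) : Prop :=
  ∃ Z, ZClosed Z ∧ ¬ X ⊆ Z ∧
    ∀ C ∈ 𝒞, ∀ C' ∈ 𝒞,
      (∃ y ∈ X \ Z, y ∈ C) → (∃ y ∈ X \ Z, y ∈ C') →
      (∃ T, IsTangentAt x C T ∧ IsTangentAt x C' T) → C = C'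

/-- A maximal `x`-covering family: an `x`-covering family not contained in any
strictly larger one. -/
def MaximalFam (X : Set (Proj ι)) (x : Proj ι) (𝒞 : Set (Set (Proj ι))) : Prop :=
  XCovFam X x 𝒞 ∧ ∀ 𝒞', XCovFam X x 𝒞' → 𝒞 ⊆ 𝒞' → 𝒞' = 𝒞

/-- Abstract numerical data on the `n`-dimensional embedded manifold `X`:
the groups `Pic = N¹(X)` and `Cur = N₁(X)`, the intersection pairing, the classes
of curves and of effective divisors, the canonical class `K` and hyperplane class
`H`, the splitting type `nb C` of the normal bundle of a smooth curve `C ⊆ X`,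
and the second Betti number `b2` (= rank of `Pic`). -/
structure NumData {ι : Type} [Fintype ι] (n : ℕ) (X : Set (Proj ι)) where
  Pic : Type
  Cur : Type
  [picGroup : AddCommGroup Pic]
  [curGroup : AddCommGroup Cur]
  /-- intersection pairing between divisor classes and curve classes -/
  ip : Pic →+ Cur →+ ℤ
  /-- numerical class of a curve contained in `X` -/
  cls : Set (Proj ι) → Cur
  /-- class of an effective divisor on `X`, given as a closed subset -/
  divCls : Set (Proj ι) → Pic
  /-- canonical class -/
  K : Pic
  /-- hyperplane class -/
  H : Pic
  /-- splitting type of the normal bundle of a smooth curve in `X` -/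
  nb : Set (Proj ι) → Multiset ℤ
  /-- second Betti number -/
  b2 : ℕ
  h_deg : ∀ (d : ℕ) (C : Set (Proj ι)), IsDegCurve d C → C ⊆ X → ip H (cls C) = d
  eff_pos : ∀ D : Set (Proj ι), ZClosed D →
    ∀ (d : ℕ) (C : Set (Proj ι)), IsDegCurve d C → C ⊆ X → ¬ C ⊆ D → (C ∩ D).Nonempty →
    0 < ip (divCls D) (cls C)
  nb_card : ∀ (d : ℕ) (C : Set (Proj ι)), IsDegCurve d C → C ⊆ X →
    Multiset.card (nb C) = n - 1
  nb_sum : ∀ (d : ℕ) (C : Set (Proj ι)), IsDegCurve d C → C ⊆ X →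
    (nb C).sum = -(ip K (cls C)) - 2
  b2_li : ∃ Ds : Fin b2 → Pic, LinearIndependent ℤ Ds
  b2_max : ∀ Ds : Fin (b2+1) → Pic, ¬ LinearIndependent ℤ Ds

attribute [instance] NumData.picGroup NumData.curGroup

/-- `X` is Fano: `-K_X` is positive on all curves of `X` (Kleiman-type criterion). -/
def Fano {ι : Type} [Fintype ι] {n : ℕ} {X : Set (Proj ι)} (D : NumData n X) : Prop :=
  ∀ (d : ℕ) (C : Set (Proj ι)), 0 < d → IsDegCurve d C → C ⊆ X →
    0 < D.ip (-D.K) (D.cls C)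

/-- `C` is a quasi-line of `X`: a rational curve in `X` whose normal bundle is
`O(1)^{⊕(n-1)}`. -/
def IsQuasiLine {ι : Type} [Fintype ι] {n : ℕ} {X : Set (Proj ι)} (D : NumData n X)
    (C : Set (Proj ι)) : Prop :=
  IsRatCurve C ∧ C ⊆ X ∧ D.nb C = Multiset.replicate (n-1) 1

/-- A smooth rational curve of degree `d`: injective immersive parametrization. -/
def IsSmoothDegCurve (d : ℕ) (C : Set (Proj ι)) : Prop :=
  ∃ F, GoodParam d F ∧ C = curveImage F ∧
    (∀ (v w : Fin 2 → ℂ) (hv : v ≠ 0) (hw : w ≠ 0) (h1 : pev F v ≠ 0) (h2 : pev F w ≠ 0),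
      Projectivization.mk ℂ (pev F v) h1 = Projectivization.mk ℂ (pev F w) h2 →
      Projectivization.mk ℂ v hv = Projectivization.mk ℂ w hw) ∧
    ∀ v : Fin 2 → ℂ, v ≠ 0 → (jacC F v).rank = 2

/-- A smooth conic. -/
def IsSmoothConic (C : Set (Proj ι)) : Prop :=
  IsSmoothDegCurve 2 C ∧ ¬ ∃ L, IsLine L ∧ C ⊆ L

/-- A morphism on `X` given by homogeneous forms of a common degree. -/
def PolyMapOn {κ : Type} (X : Set (Proj ι)) (f : Proj ι → Proj κ) : Prop :=
  ∃ (e : ℕ) (G : κ → MvPolynomial ι ℂ),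
    (∀ i, (G i).IsHomogeneous e) ∧
    ∀ x ∈ X, ∃ h : (fun i => MvPolynomial.eval x.rep (G i)) ≠ 0,
      f x = Projectivization.mk ℂ (fun i => MvPolynomial.eval x.rep (G i)) h

/-- `S` is a linear subspace `ℙ^a` of the ambient projective space. -/
def IsLinearOfDim (a : ℕ) (S : Set (Proj ι)) : Prop :=
  ∃ W : Submodule ℂ (ι → ℂ), Module.finrank ℂ W = a + 1 ∧ S = {x | x.rep ∈ W}

/-- The line through `x` with direction `w`. -/
def lineThrough (x : Proj ι) (w : ι → ℂ) : Set (Proj ι) :=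
  {p | ∃ (s t : ℂ) (h : s • Projectivization.rep x + t • w ≠ 0),
        p = Projectivization.mk ℂ (s • Projectivization.rep x + t • w) h}

/-- The variety `Y_x` of tangent directions of lines through `x` lying in `X`. -/
def linesLocus (X : Set (Proj ι)) (x : Proj ι) : Set (Proj ι) :=
  {u | lineThrough x u.rep ⊆ X}

/-- `X ⊆ ℙ^N` is linearly normal: it is not the isomorphic linear projection of a
nondegenerate variety in `ℙ^{N+1}`. -/
def LinearlyNormal (X : Set (Proj ι)) : Prop :=
  ¬ ∃ (X' : Set (Proj (ι ⊕ Unit))) (π : ((ι ⊕ Unit) → ℂ) →ₗ[ℂ] (ι → ℂ)),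
      Function.Surjective π ∧ Nondegenerate X' ∧
      (∀ x' ∈ X', π (Projectivization.rep x') ≠ 0) ∧
      ∃ g : Proj (ι ⊕ Unit) → Proj ι,
        (∀ x' ∈ X', ∀ h : π (Projectivization.rep x') ≠ 0,
          g x' = Projectivization.mk ℂ (π (Projectivization.rep x')) h) ∧
        Set.InjOn g X' ∧ g '' X' = X


open MvPolynomial in
private lemma CCaux_eval_smul_sq {σ : Type} (f : MvPolynomial σ ℂ) (hf : f.IsHomogeneous 2)
    (c : ℂ) (v : σ → ℂ) : eval (c • v) f = c ^ 2 * eval v f := by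
  classical
  rw [eval_eq, eval_eq, Finset.mul_sum]
  refine Finset.sum_congr rfl fun d hd => ?_
  have h2 : ∑ i ∈ d.support, d i = 2 := by
    have := hf (mem_support_iff.mp hd)
    rw [Finsupp.weight_apply, Finsupp.sum] at this
    simpa using this
  calc coeff d f * ∏ i ∈ d.support, (c • v) i ^ d i
      = coeff d f * ((∏ i ∈ d.support, c ^ d i) * ∏ i ∈ d.support, v i ^ d i) := by
        rw [← Finset.prod_mul_distrib]; simp [mul_pow]
    _ = c ^ 2 * (coeff d f * ∏ i ∈ d.support, v i ^ d i) := by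
        rw [Finset.prod_pow_eq_pow_sum, h2]; ring

open MvPolynomial in
private lemma CCaux_eval_line {σ : Type} (f : MvPolynomial σ ℂ) (a b : σ → ℂ) (t : ℂ) :
    Polynomial.eval t (MvPolynomial.aeval
      (fun i => Polynomial.C (a i) + Polynomial.C (b i) * Polynomial.X) f) =
    eval (a + t • b) f := by
  rw [aeval_def, show (Polynomial.eval t : Polynomial ℂ → ℂ) = ⇑(Polynomial.evalRingHom t) from rfl,
    eval₂_comp_left (Polynomial.evalRingHom t)]
  rw [show eval (a + t • b) f = eval₂Hom (RingHom.id ℂ) (a + t • b) f from rfl,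
    show eval₂ ((Polynomial.evalRingHom t).comp (algebraMap ℂ (Polynomial ℂ)))
      (⇑(Polynomial.evalRingHom t) ∘ fun i => Polynomial.C (a i) + Polynomial.C (b i) * Polynomial.X) f
      = eval₂Hom _ _ f from rfl]
  apply eval₂Hom_congr
  · ext x; simp
  · funext i
    show Polynomial.eval t (Polynomial.C (a i) + Polynomial.C (b i) * Polynomial.X) = a i + t • b i
    rw [Polynomial.eval_add, Polynomial.eval_mul, Polynomial.eval_C, Polynomial.eval_C,
      Polynomial.eval_X, smul_eq_mul, mul_comm]
  · rfl

/-- Let `Λ` be a linear system of quadric hypersurfaces in `ℙ^n`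
with base locus `Y`, such that the induced rational map is an isomorphism
(separates points) outside `Y`. If `Y` is nonempty and for any two points
`y₁, y₂ ∈ Y` the quadrics of `Λ` cannot separate points on the line `⟨y₁, y₂⟩`
(all evaluation vectors along the line are proportional), then `Y` is a linear
subspace `ℙ^s` of `ℙ^n`. -/
theorem stmt16 (n : ℕ) (Λ : Submodule ℂ (MvPolynomial (Fin (n+1)) ℂ))
    (hΛ : ∀ f ∈ Λ, MvPolynomial.IsHomogeneous f 2)
    (Y : Set (Proj (Fin (n+1))))
    (hY : Y = {x | ∀ f ∈ Λ, MvPolynomial.eval x.rep f = 0})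
    (hYne : Y.Nonempty)
    (hiso : ∀ x : Proj (Fin (n+1)), x ∉ Y → ∀ y : Proj (Fin (n+1)), y ∉ Y → x ≠ y →
      ∃ f ∈ Λ, ∃ g ∈ Λ,
        MvPolynomial.eval x.rep f * MvPolynomial.eval y.rep g ≠
          MvPolynomial.eval x.rep g * MvPolynomial.eval y.rep f)
    (hline : ∀ y₁ ∈ Y, ∀ y₂ ∈ Y, ∀ s t s' t' : ℂ, ∀ f ∈ Λ, ∀ g ∈ Λ,
      MvPolynomial.eval (s • Projectivization.rep y₁ + t • Projectivization.rep y₂) f *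
        MvPolynomial.eval (s' • Projectivization.rep y₁ + t' • Projectivization.rep y₂) g =
      MvPolynomial.eval (s • Projectivization.rep y₁ + t • Projectivization.rep y₂) g *
        MvPolynomial.eval (s' • Projectivization.rep y₁ + t' • Projectivization.rep y₂) f) :
    ∃ W : Submodule ℂ (Fin (n+1) → ℂ), Y = {x | x.rep ∈ W} := by
  classical
  -- Key claim: every quadric of Λ vanishes on the whole line through two points of Y.
  have key : ∀ y₁ ∈ Y, ∀ y₂ ∈ Y, ∀ s t : ℂ, ∀ f ∈ Λ,
      MvPolynomial.eval (s • Projectivization.rep y₁ + t • Projectivization.rep y₂) f = 0 := by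
    intro y₁ hy₁ y₂ hy₂
    set a := Projectivization.rep y₁ with ha_def
    set b := Projectivization.rep y₂ with hb_def
    have ha : ∀ f ∈ Λ, MvPolynomial.eval a f = 0 := by
      intro f hf; exact (hY ▸ hy₁) f hf
    have hb : ∀ f ∈ Λ, MvPolynomial.eval b f = 0 := by
      intro f hf; exact (hY ▸ hy₂) f hf
    by_cases hprop : ∃ c : ℂ, b = c • a
    · obtain ⟨c, hc⟩ := hprop
      intro s t f hf
      have : s • a + t • b = (s + t * c) • a := by rw [hc, smul_smul]; module
      rw [this, CCaux_eval_smul_sq f (hΛ f hf), ha f hf, mul_zero]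
    · -- a and b are linearly independent
      have hind : ∀ c d : ℂ, c • a + d • b = 0 → c = 0 ∧ d = 0 := by
        intro c d h
        have hd : d = 0 := by
          by_contra hd0
          refine hprop ⟨-c / d, ?_⟩
          have hdb : d • b = (-c) • a := by
            rw [neg_smul]; exact eq_neg_of_add_eq_zero_right h
          have hb2 : b = d⁻¹ • (d • b) := (inv_smul_smul₀ hd0 b).symm
          rw [hdb] at hb2
          rw [div_eq_inv_mul, ← smul_smul]
          exact hb2
        subst hd
        have : c • a = 0 := by rw [← h]; module
        rcases smul_eq_zero.mp this with h' | h'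
        · exact ⟨h', rfl⟩
        · exact absurd h' (Projectivization.rep_nonzero y₁)
      intro s t f hf
      by_contra hne
      have hs : s ≠ 0 := by
        rintro rfl
        apply hne
        have : (0 : ℂ) • a + t • b = t • b := by module
        rw [this, CCaux_eval_smul_sq f (hΛ f hf), hb f hf, mul_zero]
      set q : Polynomial ℂ := MvPolynomial.aeval
        (fun i => Polynomial.C (a i) + Polynomial.C (b i) * Polynomial.X) f with hq_def
      have hqeval : ∀ u : ℂ, q.eval u = MvPolynomial.eval (a + u • b) f := fun u =>
        CCaux_eval_line f a b u
      have hq0 : q.eval (t / s) ≠ 0 := by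
        rw [hqeval]
        intro h0
        apply hne
        have : s • a + t • b = s • (a + (t / s) • b) := by
          rw [smul_add, smul_smul, mul_div_cancel₀ _ hs]
        rw [this, CCaux_eval_smul_sq f (hΛ f hf), h0, mul_zero]
      have hqne : q ≠ 0 := by intro h; rw [h] at hq0; simp at hq0
      have hroots : {x : ℂ | q.IsRoot x}.Finite := Polynomial.finite_setOf_isRoot hqne
      have hinf : {u : ℂ | q.eval u ≠ 0}.Infinite := by
        have : {u : ℂ | q.eval u ≠ 0} = {x : ℂ | q.IsRoot x}ᶜ := by
          ext u; simp [Polynomial.IsRoot]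
        rw [this]
        exact hroots.infinite_compl
      obtain ⟨t₁, ht₁, t₂, ht₂, h12⟩ := hinf.nontrivial
      have hv : ∀ u : ℂ, a + u • b ≠ 0 := by
        intro u h
        have : (1 : ℂ) • a + u • b = 0 := by rw [one_smul]; exact h
        exact one_ne_zero (hind 1 u this).1
      set v₁ := a + t₁ • b with hv₁_def
      set v₂ := a + t₂ • b with hv₂_def
      set x₁ := Projectivization.mk ℂ v₁ (hv t₁) with hx₁_def
      set x₂ := Projectivization.mk ℂ v₂ (hv t₂) with hx₂_def
      obtain ⟨c₁, hc₁⟩ := Projectivization.exists_smul_eq_mk_rep ℂ v₁ (hv t₁)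
      obtain ⟨c₂, hc₂⟩ := Projectivization.exists_smul_eq_mk_rep ℂ v₂ (hv t₂)
      have hrep₁ : Projectivization.rep x₁ = (c₁ : ℂ) • v₁ := by
        rw [← hc₁]; rfl
      have hrep₂ : Projectivization.rep x₂ = (c₂ : ℂ) • v₂ := by
        rw [← hc₂]; rfl
      have hx₁Y : x₁ ∉ Y := by
        rw [hY]
        intro h
        have h0 := h f hf
        rw [hrep₁, CCaux_eval_smul_sq f (hΛ f hf)] at h0
        have hne1 : MvPolynomial.eval v₁ f ≠ 0 := by rw [hv₁_def, ← hqeval]; exact ht₁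
        rcases mul_eq_zero.mp h0 with h1 | h1
        · exact (Units.ne_zero c₁) ((pow_eq_zero_iff two_ne_zero).mp h1)
        · exact hne1 h1
      have hx₂Y : x₂ ∉ Y := by
        rw [hY]
        intro h
        have h0 := h f hf
        rw [hrep₂, CCaux_eval_smul_sq f (hΛ f hf)] at h0
        have hne2 : MvPolynomial.eval v₂ f ≠ 0 := by rw [hv₂_def, ← hqeval]; exact ht₂
        rcases mul_eq_zero.mp h0 with h1 | h1
        · exact (Units.ne_zero c₂) ((pow_eq_zero_iff two_ne_zero).mp h1)
        · exact hne2 h1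
      have hx₁₂ : x₁ ≠ x₂ := by
        intro h
        rw [hx₁_def, hx₂_def, Projectivization.mk_eq_mk_iff] at h
        obtain ⟨u, hu⟩ := h
        have : ((u : ℂ) - 1) • a + ((u : ℂ) * t₂ - t₁) • b = 0 := by
          have : (u : ℂ) • v₂ = v₁ := hu
          rw [hv₁_def, hv₂_def] at this
          have h2 : (u : ℂ) • a + ((u : ℂ) * t₂) • b = a + t₁ • b := by
            rw [← this]; rw [smul_add, smul_smul]
          calc ((u : ℂ) - 1) • a + ((u : ℂ) * t₂ - t₁) • b
              = ((u : ℂ) • a + ((u : ℂ) * t₂) • b) - (a + t₁ • b) := by module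
            _ = 0 := by rw [h2, sub_self]
        obtain ⟨h1, h2⟩ := hind _ _ this
        have hu1 : (u : ℂ) = 1 := by linear_combination h1
        apply h12
        rw [hu1, one_mul] at h2
        exact (sub_eq_zero.mp h2).symm
      obtain ⟨f', hf', g', hg', hsep⟩ := hiso x₁ hx₁Y x₂ hx₂Y hx₁₂
      apply hsep
      have hl := hline y₁ hy₁ y₂ hy₂ (c₁ : ℂ) ((c₁ : ℂ) * t₁) (c₂ : ℂ) ((c₂ : ℂ) * t₂)
        f' hf' g' hg'
      have e₁ : (c₁ : ℂ) • a + ((c₁ : ℂ) * t₁) • b = Projectivization.rep x₁ := by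
        rw [hrep₁, hv₁_def, smul_add, smul_smul]
      have e₂ : (c₂ : ℂ) • a + ((c₂ : ℂ) * t₂) • b = Projectivization.rep x₂ := by
        rw [hrep₂, hv₂_def, smul_add, smul_smul]
      rw [← ha_def, ← hb_def, e₁, e₂] at hl
      exact hl
  -- Build the linear subspace
  obtain ⟨y₀, hy₀⟩ := hYne
  have hzero : ∀ f ∈ Λ, MvPolynomial.eval (0 : Fin (n+1) → ℂ) f = 0 := by
    intro f hf
    have := key y₀ hy₀ y₀ hy₀ 0 0 f hf
    simpa using this
  refine ⟨{ carrier := {v | ∀ f ∈ Λ, MvPolynomial.eval v f = 0}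
            zero_mem' := hzero
            add_mem' := ?_
            smul_mem' := ?_ }, ?_⟩
  · intro u v hu hv
    by_cases hu0 : u = 0
    · subst hu0; simpa using hv
    by_cases hv0 : v = 0
    · subst hv0; simpa using hu
    have hyu : Projectivization.mk ℂ u hu0 ∈ Y := by
      rw [hY]
      intro f hf
      obtain ⟨c, hc⟩ := Projectivization.exists_smul_eq_mk_rep ℂ u hu0
      have : Projectivization.rep (Projectivization.mk ℂ u hu0) = (c : ℂ) • u := by
        rw [← hc]; rfl
      rw [this, CCaux_eval_smul_sq f (hΛ f hf), hu f hf, mul_zero]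
    have hyv : Projectivization.mk ℂ v hv0 ∈ Y := by
      rw [hY]
      intro f hf
      obtain ⟨c, hc⟩ := Projectivization.exists_smul_eq_mk_rep ℂ v hv0
      have : Projectivization.rep (Projectivization.mk ℂ v hv0) = (c : ℂ) • v := by
        rw [← hc]; rfl
      rw [this, CCaux_eval_smul_sq f (hΛ f hf), hv f hf, mul_zero]
    intro f hf
    obtain ⟨c, hc⟩ := Projectivization.exists_smul_eq_mk_rep ℂ u hu0
    obtain ⟨d, hd⟩ := Projectivization.exists_smul_eq_mk_rep ℂ v hv0
    have := key _ hyu _ hyv ((c⁻¹ : ℂˣ) : ℂ) ((d⁻¹ : ℂˣ) : ℂ) f hf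
    have e : ((c⁻¹ : ℂˣ) : ℂ) • Projectivization.rep (Projectivization.mk ℂ u hu0)
        + ((d⁻¹ : ℂˣ) : ℂ) • Projectivization.rep (Projectivization.mk ℂ v hv0) = u + v := by
      have h1 : Projectivization.rep (Projectivization.mk ℂ u hu0) = (c : ℂ) • u := by
        rw [← hc]; rfl
      have h2 : Projectivization.rep (Projectivization.mk ℂ v hv0) = (d : ℂ) • v := by
        rw [← hd]; rfl
      rw [h1, h2, smul_smul, smul_smul]
      simp
    rw [e] at this
    exact this
  · intro c v hv f hf
    have : c • v = (c : ℂ) • v := rfl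
    rw [CCaux_eval_smul_sq f (hΛ f hf), hv f hf, mul_zero]
  · exact hY


end CC
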